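/- arXiv:1601.07739 — 2 statements merged into one kernel-verified Lean document; each statement's English description precedes it below -/
import Mathlib

section
/- Let X be a nonempty finite design space, let p and s be natural numbers with 0 < s and s < p, and let m : X → Matrix (Fin p) (Fin p) ℝ assign to each design point a symmetric positive semidefinite matrix. Let A : Matrix (Fin p) (Fin s) ℝ be the matrix whose transpose is the block matrix (I_s 0). For a design w with M(w) positive definite, write the block decomposition M(w) = fromBlocks M₁₁(w) M₁₂(w) M₁₂(w)ᵀ M₂₂(w) with M₁₁(w) of size s×s. Suppose w* is a design with M(w*) positive definite. Then w* maximizes the D_s-criterion w ↦ log det(M₁₁(w) - M₁₂(w) * M₂₂(w)⁻¹ * M₁₂(w)ᵀ) over all designs with positive definite information matrix if and only if for every x ∈ X, trace(M(w*)⁻¹ * A * (Aᵀ * M(w*)⁻¹ * A)⁻¹ * Aᵀ * M(w*)⁻¹ * m(x)) ≤ s. -/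
/-!
Write `C(M) = (Aᵀ M⁻¹ A)⁻¹`. For `Aᵀ = (I_s 0)` the matrix `Aᵀ M⁻¹ A` is the leading block of
`M⁻¹`, whose inverse is the Schur complement, so the `D_s`-criterion is `log det C(M)`. With
`G(M) = M⁻¹ A C(M) Aᵀ M⁻¹` one has `tr (G(M) M) = s` and the concavity bound
`log det C(N) ≤ log det C(M) + tr (G(M) N) - s`: it follows from `log det X ≤ tr X - dim` applied to
`C(M)⁻¹ C(N)` together with the Gauss–Markov inequality `C(N) ≤ T N Tᵀ` for the left inverse
`T = C(M) Aᵀ M⁻¹` of `A`. Averaging the trace condition over a design therefore gives optimality.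
Conversely, if `tr (G(M) m(x)) > s`, the directional derivative of `log det C` at `M` towards `m(x)`
is positive, so moving a little weight onto `x` improves the criterion.
-/

open Matrix

namespace Matrix

section LogDet

variable {n : Type*} [Fintype n] [DecidableEq n]

lemma PosDef.log_det_le_trace_sub_card {C : Matrix n n ℝ} (hC : C.PosDef) :
    Real.log C.det ≤ C.trace - Fintype.card n := by
  have hev := hC.eigenvalues_pos
  calc Real.log C.det = ∑ i, Real.log (hC.1.eigenvalues i) := by
        rw [hC.1.det_eq_prod_eigenvalues, ← Real.log_prod fun i _ => (hev i).ne']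
        simp
    _ ≤ ∑ i, (hC.1.eigenvalues i - 1) :=
        Finset.sum_le_sum fun i _ => Real.log_le_sub_one_of_pos (hev i)
    _ = C.trace - Fintype.card n := by
        simp [hC.1.trace_eq_sum_eigenvalues, Finset.sum_sub_distrib]

open scoped MatrixOrder in
lemma PosDef.log_det_sub_log_det_le {M N : Matrix n n ℝ} (hM : M.PosDef) (hN : N.PosDef) :
    Real.log N.det - Real.log M.det ≤ (M⁻¹ * N).trace - Fintype.card n := by
  set R := CFC.sqrt M⁻¹
  have hRR : R * R = M⁻¹ := CFC.sqrt_mul_sqrt_self _ hM.inv.posSemidef.nonneg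
  have hR : star R = R := (CFC.sqrt_nonneg M⁻¹).posSemidef.1
  have hC : (R * N * star R).PosDef :=
    (IsUnit.posDef_star_right_conjugate_iff
      (IsStrictlyPositive.isUnit_cfcSqrt _ hM.inv.isStrictlyPositive)).mpr hN
  have hdet : (R * N * star R).det = (M.det)⁻¹ * N.det := by
    rw [hR, det_mul, det_mul, mul_right_comm, ← det_mul, hRR, det_nonsing_inv,
      Ring.inverse_eq_inv']
  have htr : (R * N * star R).trace = (M⁻¹ * N).trace := by
    rw [hR, trace_mul_comm, ← Matrix.mul_assoc, hRR]
  have := hC.log_det_le_trace_sub_card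
  rwa [hdet, htr, Real.log_mul (inv_ne_zero hM.det_pos.ne') hN.det_pos.ne', Real.log_inv,
    neg_add_eq_sub] at this

lemma log_det_inv (K : Matrix n n ℝ) : Real.log K⁻¹.det = -Real.log K.det := by
  rw [det_nonsing_inv, Ring.inverse_eq_inv', Real.log_inv]

open scoped MatrixOrder in
lemma PosSemidef.trace_mul_nonneg {P X : Matrix n n ℝ} (hP : P.PosSemidef) (hX : X.PosSemidef) :
    0 ≤ (P * X).trace := by
  set R := CFC.sqrt P
  have hR : Rᴴ = R := (CFC.sqrt_nonneg P).posSemidef.1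
  rw [← CFC.sqrt_mul_sqrt_self P hP.nonneg, Matrix.mul_assoc, trace_mul_comm, Matrix.mul_assoc]
  simpa only [hR, Matrix.mul_assoc] using (hX.mul_mul_conjTranspose_same R).trace_nonneg

lemma continuousAt_inv_add_smul {M : Matrix n n ℝ} (hM : IsUnit M.det) (Q : Matrix n n ℝ) :
    ContinuousAt (fun t : ℝ => (M + t • Q)⁻¹) 0 := by
  have hinv : ContinuousAt Inv.inv M := continuousAt_matrix_inv M <| by
    simpa using NormedRing.inverse_continuousAt hM.unit
  exact ContinuousAt.comp (by simpa using hinv) (by fun_prop)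

end LogDet

section GaussMarkov

lemma PosDef.isSymm {n : Type*} {N : Matrix n n ℝ} (hN : N.PosDef) : N.IsSymm :=
  isHermitian_iff_isSymm.mp hN.1

variable {n k : Type*} [Fintype n] [Fintype k]

lemma PosDef.transpose_mul_mul_same {N : Matrix n n ℝ} (hN : N.PosDef) {A : Matrix n k ℝ}
    (hA : Function.Injective A.mulVec) : (Aᵀ * N * A).PosDef := by
  simpa only [conjTranspose_eq_transpose_of_trivial] using hN.conjTranspose_mul_mul_same hA

variable [DecidableEq k]

lemma mulVec_injective_of_mul_eq_one {A : Matrix n k ℝ} {T : Matrix k n ℝ} (hTA : T * A = 1) :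
    Function.Injective A.mulVec := fun u v h => by
  simpa only [mulVec_mulVec, hTA, one_mulVec] using congrArg (T *ᵥ ·) h

variable [DecidableEq n]

open scoped MatrixOrder in
/-- The Gauss–Markov inequality. -/
lemma PosDef.inv_transpose_mul_inv_mul_le {N : Matrix n n ℝ} (hN : N.PosDef)
    {A : Matrix n k ℝ} {T : Matrix k n ℝ} (hTA : T * A = 1) :
    (Aᵀ * N⁻¹ * A)⁻¹ ≤ T * N * Tᵀ := by
  have hK := hN.inv.transpose_mul_mul_same (mulVec_injective_of_mul_eq_one hTA)
  set C := (Aᵀ * N⁻¹ * A)⁻¹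
  have hN₀ : IsUnit N.det := hN.det_pos.ne'.isUnit
  have hKC : Aᵀ * N⁻¹ * A * C = 1 := mul_nonsing_inv _ hK.det_pos.ne'.isUnit
  rw [Matrix.mul_assoc, Matrix.mul_assoc] at hKC
  have hTAC : T * (A * C) = C := by rw [← Matrix.mul_assoc, hTA, Matrix.one_mul]
  have hATt : Aᵀ * Tᵀ = 1 := by rw [← transpose_mul, hTA, transpose_one]
  have hWt : (T - C * Aᵀ * N⁻¹)ᵀ = Tᵀ - N⁻¹ * (A * C) := by
    rw [transpose_sub, transpose_mul, transpose_mul, transpose_transpose, hN.inv.isSymm.eq,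
      hK.inv.isSymm.eq]
  have hW : (T - C * Aᵀ * N⁻¹) * N * (T - C * Aᵀ * N⁻¹)ᵀ = T * N * Tᵀ - C := by
    rw [hWt]
    simp only [Matrix.sub_mul, Matrix.mul_sub, Matrix.mul_assoc,
      mul_nonsing_inv_cancel_left _ _ hN₀, nonsing_inv_mul_cancel_left _ _ hN₀, hKC, hTAC, hATt,
      Matrix.mul_one]
    abel
  rw [le_iff, ← hW]
  simpa only [conjTranspose_eq_transpose_of_trivial] using
    hN.posSemidef.mul_mul_conjTranspose_same (T - C * Aᵀ * N⁻¹)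

end GaussMarkov

section Criterion

variable {n k : Type*} [Fintype n] [DecidableEq n] [Fintype k] [DecidableEq k]
  {A : Matrix n k ℝ} {M N : Matrix n n ℝ}

lemma log_det_inv_transpose_mul_inv_mul_sub_le (hA : Function.Injective A.mulVec)
    (hM : M.PosDef) (hN : N.PosDef) :
    Real.log (Aᵀ * N⁻¹ * A)⁻¹.det - Real.log (Aᵀ * M⁻¹ * A)⁻¹.det ≤
      (M⁻¹ * A * (Aᵀ * M⁻¹ * A)⁻¹ * Aᵀ * M⁻¹ * N).trace - Fintype.card k := by
  set K := Aᵀ * M⁻¹ * A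
  have hK : K.PosDef := hM.inv.transpose_mul_mul_same hA
  have hK₀ : IsUnit K.det := hK.det_pos.ne'.isUnit
  set T := K⁻¹ * Aᵀ * M⁻¹
  have hTA : T * A = 1 := by
    simpa only [T, K, Matrix.mul_assoc] using nonsing_inv_mul K hK₀
  have hTt : Tᵀ = M⁻¹ * A * K⁻¹ := by
    rw [transpose_mul, transpose_mul, transpose_transpose, hM.inv.isSymm.eq, hK.inv.isSymm.eq,
      Matrix.mul_assoc]
  have hKT : K * T = Aᵀ * M⁻¹ := by
    simp only [T, ← Matrix.mul_assoc, mul_nonsing_inv K hK₀, Matrix.one_mul]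
  have htr : (K * (T * N * Tᵀ)).trace = (M⁻¹ * A * K⁻¹ * Aᵀ * M⁻¹ * N).trace := by
    rw [← Matrix.mul_assoc, ← Matrix.mul_assoc, hKT, hTt, trace_mul_cycle]
    simp only [Matrix.mul_assoc]
  have hgap := hK.posSemidef.trace_mul_nonneg (le_iff.mp (hN.inv_transpose_mul_inv_mul_le hTA))
  rw [Matrix.mul_sub, trace_sub, htr, sub_nonneg] at hgap
  have hlog := hK.inv.log_det_sub_log_det_le (hN.inv.transpose_mul_mul_same hA).inv
  rw [nonsing_inv_nonsing_inv K hK₀] at hlog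
  linarith

lemma trace_le_log_det_inv_transpose_mul_inv_mul_sub (hA : Function.Injective A.mulVec)
    (hM : M.PosDef) (hN : N.PosDef) :
    ((Aᵀ * M⁻¹ * A)⁻¹ * Aᵀ * M⁻¹ * (N - M) * N⁻¹ * A).trace ≤
      Real.log (Aᵀ * N⁻¹ * A)⁻¹.det - Real.log (Aᵀ * M⁻¹ * A)⁻¹.det := by
  set KM := Aᵀ * M⁻¹ * A
  set KN := Aᵀ * N⁻¹ * A
  have hKM : KM.PosDef := hM.inv.transpose_mul_mul_same hA
  have hKN : KN.PosDef := hN.inv.transpose_mul_mul_same hA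
  have hres : M⁻¹ * (N - M) * N⁻¹ = M⁻¹ - N⁻¹ := by
    rw [Matrix.mul_sub, Matrix.sub_mul, mul_nonsing_inv_cancel_right _ _ hN.det_pos.ne'.isUnit,
      nonsing_inv_mul _ hM.det_pos.ne'.isUnit, Matrix.one_mul]
  have hmat : KM⁻¹ * Aᵀ * M⁻¹ * (N - M) * N⁻¹ * A = 1 - KM⁻¹ * KN :=
    calc _ = KM⁻¹ * (Aᵀ * (M⁻¹ * (N - M) * N⁻¹) * A) := by simp only [Matrix.mul_assoc]
      _ = KM⁻¹ * (KM - KN) := by rw [hres, Matrix.mul_sub, Matrix.sub_mul]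
      _ = 1 - KM⁻¹ * KN := by rw [Matrix.mul_sub, nonsing_inv_mul _ hKM.det_pos.ne'.isUnit]
  rw [hmat, trace_sub, trace_one, log_det_inv, log_det_inv]
  linarith [hKM.log_det_sub_log_det_le hKN]

lemma exists_log_det_inv_transpose_mul_inv_mul_lt (hA : Function.Injective A.mulVec)
    (hM : M.PosDef) {P : Matrix n n ℝ} (hP : P.PosSemidef)
    (h : Fintype.card k < (M⁻¹ * A * (Aᵀ * M⁻¹ * A)⁻¹ * Aᵀ * M⁻¹ * P).trace) :
    ∃ t : ℝ, 0 < t ∧ t < 1 ∧ Real.log (Aᵀ * M⁻¹ * A)⁻¹.det <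
      Real.log (Aᵀ * ((1 - t) • M + t • P)⁻¹ * A)⁻¹.det := by
  set K := Aᵀ * M⁻¹ * A
  have hK : K.PosDef := hM.inv.transpose_mul_mul_same hA
  -- `t * slope t` bounds the gain of the criterion at `M + t • (P - M)` from below
  set slope : ℝ → ℝ := fun t => (K⁻¹ * Aᵀ * M⁻¹ * (P - M) * (M + t • (P - M))⁻¹ * A).trace
  have hslope : ContinuousAt slope 0 := by
    have := continuousAt_inv_add_smul hM.det_pos.ne'.isUnit (P - M)
    fun_prop
  have hslope₀ : 0 < slope 0 := by
    have hKK : K⁻¹ * Aᵀ * M⁻¹ * A = 1 := by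
      simpa only [K, Matrix.mul_assoc] using nonsing_inv_mul K hK.det_pos.ne'.isUnit
    have hcyc : (K⁻¹ * Aᵀ * M⁻¹ * P * M⁻¹ * A).trace =
        (M⁻¹ * A * K⁻¹ * Aᵀ * M⁻¹ * P).trace := by
      rw [Matrix.mul_assoc (K⁻¹ * Aᵀ * M⁻¹ * P), trace_mul_comm]
      simp only [Matrix.mul_assoc]
    simp only [slope, zero_smul, add_zero, Matrix.mul_sub, Matrix.sub_mul, trace_sub, hcyc,
      nonsing_inv_mul_cancel_right _ _ hM.det_pos.ne'.isUnit, hKK, trace_one]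
    linarith
  obtain ⟨t, hpos, ht0, ht1⟩ := ((hslope.eventually (lt_mem_nhds hslope₀)).filter_mono
    nhdsWithin_le_nhds |>.and (Ioo_mem_nhdsGT one_pos)).exists
  have hNt : (1 - t) • M + t • P = M + t • (P - M) := by
    rw [sub_smul, one_smul, smul_sub]; abel
  have hNtPD : ((1 - t) • M + t • P).PosDef :=
    (hM.smul (sub_pos.mpr ht1)).add_posSemidef (hP.smul ht0.le)
  refine ⟨t, ht0, ht1, ?_⟩
  have hlow := trace_le_log_det_inv_transpose_mul_inv_mul_sub hA hM hNtPD
  rw [hNt, add_sub_cancel_left] at hlow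
  have : (K⁻¹ * Aᵀ * M⁻¹ * (t • (P - M)) * (M + t • (P - M))⁻¹ * A).trace = t * slope t := by
    simp [slope, Matrix.mul_smul, Matrix.smul_mul, trace_smul]
  rw [hNt]
  linarith [mul_pos ht0 hpos]

end Criterion

section Blocks

lemma IsSymm.toBlocks₂₁ {a b α : Type*} {M : Matrix (a ⊕ b) (a ⊕ b) α} (h : M.IsSymm) :
    M.toBlocks₂₁ = M.toBlocks₁₂ᵀ :=
  (congr_arg (·.toBlocks₂₁) h.eq).symm

variable {a b α : Type*} [Fintype a] [Fintype b] [DecidableEq a]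

lemma fromCols_one_zero_mul_mul_fromRows_one_zero [CommRing α] (N : Matrix (a ⊕ b) (a ⊕ b) α) :
    (fromCols 1 0 : Matrix a (a ⊕ b) α) * N * (fromRows 1 0 : Matrix (a ⊕ b) a α) =
      N.toBlocks₁₁ := by
  rw [← fromBlocks_toBlocks N, fromCols_mul_fromBlocks, fromCols_mul_fromRows]
  simp

variable [DecidableEq b]

lemma inv_toBlocks₁₁_inv [Field α] {M : Matrix (a ⊕ b) (a ⊕ b) α} (hM : IsUnit M.det)
    (hD : IsUnit M.toBlocks₂₂.det) :
    (M⁻¹.toBlocks₁₁)⁻¹ = M.toBlocks₁₁ - M.toBlocks₁₂ * M.toBlocks₂₂⁻¹ * M.toBlocks₂₁ := by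
  let := invertibleOfIsUnitDet _ hD
  let : Invertible (fromBlocks M.toBlocks₁₁ M.toBlocks₁₂ M.toBlocks₂₁ M.toBlocks₂₂) := by
    rw [fromBlocks_toBlocks]; exact invertibleOfIsUnitDet _ hM
  let := invertibleOfFromBlocks₂₂Invertible M.toBlocks₁₁ M.toBlocks₁₂ M.toBlocks₂₁ M.toBlocks₂₂
  have h := congr_arg (·.toBlocks₁₁)
    (invOf_fromBlocks₂₂_eq M.toBlocks₁₁ M.toBlocks₁₂ M.toBlocks₂₁ M.toBlocks₂₂)
  simp only [invOf_eq_nonsing_inv, fromBlocks_toBlocks, toBlocks_fromBlocks₁₁] at h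
  rw [h, inv_inv_of_invertible]

end Blocks

end Matrix

theorem DA_optimality_equivalence {X n k : Type*} [Fintype X] [Fintype n] [DecidableEq n]
    [Fintype k] [DecidableEq k] (m : X → Matrix n n ℝ) (hm : ∀ x, (m x).PosSemidef)
    (A : Matrix n k ℝ) (hA : Function.Injective A.mulVec)
    (wstar : X → ℝ) (hw0 : ∀ x, 0 ≤ wstar x) (hw1 : ∑ x, wstar x = 1)
    (hM : (∑ x, wstar x • m x).PosDef) :
    (∀ w : X → ℝ, (∀ x, 0 ≤ w x) → ∑ x, w x = 1 → (∑ x, w x • m x).PosDef →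
        Real.log (Aᵀ * (∑ x, w x • m x)⁻¹ * A)⁻¹.det ≤
          Real.log (Aᵀ * (∑ x, wstar x • m x)⁻¹ * A)⁻¹.det) ↔
      ∀ x, ((∑ y, wstar y • m y)⁻¹ * A * (Aᵀ * (∑ y, wstar y • m y)⁻¹ * A)⁻¹ * Aᵀ *
          (∑ y, wstar y • m y)⁻¹ * m x).trace ≤ Fintype.card k := by
  classical
  set M := ∑ x, wstar x • m x
  set G := M⁻¹ * A * (Aᵀ * M⁻¹ * A)⁻¹ * Aᵀ * M⁻¹
  constructor
  · intro hopt x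
    by_contra! hx
    obtain ⟨t, ht0, ht1, hlt⟩ := exists_log_det_inv_transpose_mul_inv_mul_lt hA hM (hm x) hx
    set w : X → ℝ := fun y => (1 - t) * wstar y + if y = x then t else 0
    have hw : ∑ y, w y • m y = (1 - t) • M + t • m x := by
      simp [w, M, add_smul, mul_smul, Finset.sum_add_distrib, ← Finset.smul_sum]
    have hw0' : ∀ y, 0 ≤ w y := fun y =>
      add_nonneg (mul_nonneg (sub_nonneg.mpr ht1.le) (hw0 y)) (by split_ifs <;> linarith)
    have hw1' : ∑ y, w y = 1 := by
      simp [w, Finset.sum_add_distrib, ← Finset.mul_sum, hw1]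
    have hwPD : (∑ y, w y • m y).PosDef := by
      rw [hw]; exact (hM.smul (sub_pos.mpr ht1)).add_posSemidef ((hm x).smul ht0.le)
    exact hlt.not_ge (hw ▸ hopt w hw0' hw1' hwPD)
  · intro h w hw0' hw1' hwPD
    have htr : (G * ∑ y, w y • m y).trace ≤ Fintype.card k :=
      calc (G * ∑ y, w y • m y).trace = ∑ y, w y * (G * m y).trace := by
            simp [Matrix.mul_sum, trace_sum, trace_smul]
        _ ≤ ∑ y, w y * (Fintype.card k : ℝ) :=
            Finset.sum_le_sum fun y _ => mul_le_mul_of_nonneg_left (h y) (hw0' y)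
        _ = Fintype.card k := by rw [← Finset.sum_mul, hw1', one_mul]
    linarith [log_det_inv_transpose_mul_inv_mul_sub_le hA hM hwPD]

theorem Ds_optimality_equivalence_general
    {X : Type*} [Fintype X] (p s : ℕ)
    (m : X → Matrix (Fin s ⊕ Fin (p - s)) (Fin s ⊕ Fin (p - s)) ℝ)
    (hm : ∀ x, (m x).PosSemidef)
    (A : Matrix (Fin s ⊕ Fin (p - s)) (Fin s) ℝ)
    (hA : Aᵀ = Matrix.fromCols (1 : Matrix (Fin s) (Fin s) ℝ)
      (0 : Matrix (Fin s) (Fin (p - s)) ℝ))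
    (wstar : X → ℝ) (hw0 : ∀ x, 0 ≤ wstar x) (hw1 : ∑ x, wstar x = 1)
    (hM : (∑ x, wstar x • m x).PosDef) :
    (∀ w : X → ℝ, (∀ x, 0 ≤ w x) → ∑ x, w x = 1 → (∑ x, w x • m x).PosDef →
        Real.log ((∑ x, w x • m x).toBlocks₁₁ -
            (∑ x, w x • m x).toBlocks₁₂ * (∑ x, w x • m x).toBlocks₂₂⁻¹ *
              ((∑ x, w x • m x).toBlocks₁₂)ᵀ).det ≤
          Real.log ((∑ x, wstar x • m x).toBlocks₁₁ -
            (∑ x, wstar x • m x).toBlocks₁₂ * (∑ x, wstar x • m x).toBlocks₂₂⁻¹ *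
              ((∑ x, wstar x • m x).toBlocks₁₂)ᵀ).det) ↔
      (∀ x : X,
        ((∑ y, wstar y • m y)⁻¹ * A * (Aᵀ * (∑ y, wstar y • m y)⁻¹ * A)⁻¹ * Aᵀ *
            (∑ y, wstar y • m y)⁻¹ * m x).trace ≤ (s : ℝ)) := by
  have hA' : A = fromRows 1 0 := by
    rw [← transpose_transpose A, hA, transpose_fromCols, transpose_one, transpose_zero]
  have hschur : ∀ N : Matrix (Fin s ⊕ Fin (p - s)) (Fin s ⊕ Fin (p - s)) ℝ, N.PosDef →
      (Aᵀ * N⁻¹ * A)⁻¹ = N.toBlocks₁₁ - N.toBlocks₁₂ * N.toBlocks₂₂⁻¹ * N.toBlocks₁₂ᵀ :=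
    fun N hN => by
      rw [hA, hA', fromCols_one_zero_mul_mul_fromRows_one_zero,
        inv_toBlocks₁₁_inv hN.det_pos.ne'.isUnit
          (hN.submatrix Sum.inr_injective).det_pos.ne'.isUnit, hN.isSymm.toBlocks₂₁]
  have hAinj : Function.Injective A.mulVec :=
    mulVec_injective_of_mul_eq_one (T := Aᵀ) (by rw [hA, hA', fromCols_mul_fromRows]; simp)
  refine Iff.trans ?_ ((DA_optimality_equivalence m hm A hAinj wstar hw0 hw1 hM).trans
    (by simp only [Fintype.card_fin]))
  exact forall₄_congr fun w _ _ hw => by rw [hschur _ hw, hschur _ hM]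

/-- Corollary 2: the Kiefer–Wolfowitz type equivalence theorem specialized to
`D_s`-optimality, i.e. `D_A`-optimality with `Aᵀ = (I_s 0)`; the `D_s`-criterion
is `log det` of the Schur complement of the lower-right block of `M(w)`. -/
theorem Ds_optimality_equivalence
    {X : Type*} [Fintype X] [Nonempty X] (p s : ℕ) (hs : 0 < s) (hsp : s < p)
    (m : X → Matrix (Fin s ⊕ Fin (p - s)) (Fin s ⊕ Fin (p - s)) ℝ)
    (hm : ∀ x, (m x).PosSemidef)
    (A : Matrix (Fin s ⊕ Fin (p - s)) (Fin s) ℝ)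
    (hA : Aᵀ = Matrix.fromCols (1 : Matrix (Fin s) (Fin s) ℝ)
      (0 : Matrix (Fin s) (Fin (p - s)) ℝ))
    (wstar : X → ℝ) (hw0 : ∀ x, 0 ≤ wstar x) (hw1 : ∑ x, wstar x = 1)
    (hM : (∑ x, wstar x • m x).PosDef) :
    (∀ w : X → ℝ, (∀ x, 0 ≤ w x) → ∑ x, w x = 1 → (∑ x, w x • m x).PosDef →
        Real.log ((∑ x, w x • m x).toBlocks₁₁ -
            (∑ x, w x • m x).toBlocks₁₂ * (∑ x, w x • m x).toBlocks₂₂⁻¹ *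
              ((∑ x, w x • m x).toBlocks₁₂)ᵀ).det ≤
          Real.log ((∑ x, wstar x • m x).toBlocks₁₁ -
            (∑ x, wstar x • m x).toBlocks₁₂ * (∑ x, wstar x • m x).toBlocks₂₂⁻¹ *
              ((∑ x, wstar x • m x).toBlocks₁₂)ᵀ).det) ↔
      (∀ x : X,
        ((∑ y, wstar y • m y)⁻¹ * A * (Aᵀ * (∑ y, wstar y • m y)⁻¹ * A)⁻¹ * Aᵀ *
            (∑ y, wstar y • m y)⁻¹ * m x).trace ≤ (s : ℝ)) :=
  Ds_optimality_equivalence_general p s m hm A hA wstar hw0 hw1 hM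
end

section
/- Let p and s be natural numbers with 0 < s ≤ p and let A : Matrix (Fin p) (Fin s) ℝ have rank s. Then the function M ↦ -log(det(Aᵀ * M⁻¹ * A)) is concave on the set of symmetric positive definite p×p real matrices: for all symmetric positive definite matrices M and N and all t ∈ [0,1], -log(det(Aᵀ * ((1-t) • M + t • N)⁻¹ * A)) ≥ (1-t) * (-log(det(Aᵀ * M⁻¹ * A))) + t * (-log(det(Aᵀ * N⁻¹ * A))). -/
/-!
By Gauss–Markov, `C(M) = (Aᵀ M⁻¹ A)⁻¹` is the Loewner minimum of `Lᵀ M L` over all `L` with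
`Aᵀ L = 1`, attained at `L = M⁻¹ A C(M)`. As a pointwise minimum of linear functions of `M`,
`C` is concave in the Loewner order. Composing with `log det`, which is Loewner-monotone and
concave on positive definite matrices (both by simultaneously diagonalizing two positive
definite matrices), shows that `log det C(M) = -log det (Aᵀ M⁻¹ A)` is concave.
-/

open Matrix
open scoped MatrixOrder

theorem ConcaveOn.comp_of_mapsTo {𝕜 E β γ : Type*} [Semiring 𝕜] [PartialOrder 𝕜]
    [AddCommMonoid E] [AddCommMonoid β] [PartialOrder β] [AddCommMonoid γ] [PartialOrder γ]
    [SMul 𝕜 E] [SMul 𝕜 β] [SMul 𝕜 γ] {s : Set E} {t : Set β} {f : E → β} {g : β → γ}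
    (hg : ConcaveOn 𝕜 t g) (hf : ConcaveOn 𝕜 s f) (hg' : MonotoneOn g t) (hst : Set.MapsTo f s t) :
    ConcaveOn 𝕜 s (g ∘ f) :=
  ⟨hf.1, fun _ hx _ hy _ _ ha hb hab =>
    (hg.2 (hst hx) (hst hy) ha hb hab).trans <|
      hg' (hg.1 (hst hx) (hst hy) ha hb hab) (hst <| hf.1 hx hy ha hb hab) (hf.2 hx hy ha hb hab)⟩

namespace Matrix

lemma mulVec_injective_of_rank_eq_card {K m k : Type*} [Field K] [Fintype k]
    {A : Matrix m k K} (hA : A.rank = Fintype.card k) : Function.Injective A.mulVec :=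
  mulVec_injective_iff.2 <| linearIndependent_iff_card_eq_finrank_span.2 <| by
    rw [← hA, rank_eq_finrank_span_cols]; rfl

lemma convex_setOf_posDef {n : Type*} : Convex ℝ {M : Matrix n n ℝ | M.PosDef} := by
  intro B hB C hC a b ha hb hab
  rcases ha.eq_or_lt with rfl | ha
  · rw [zero_add] at hab
    simpa [hab] using hC
  · exact (hB.smul ha).add_posSemidef (hC.posSemidef.smul hb)

variable {n : Type*} [Fintype n] [DecidableEq n]

lemma IsHermitian.det_smul_one_add_smul {X : Matrix n n ℝ} (hX : X.IsHermitian) (a b : ℝ) :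
    (a • 1 + b • X).det = ∏ i, (a + b * hX.eigenvalues i) := by
  conv_lhs => rw [hX.spectral_theorem]
  rw [← map_one (Unitary.conjStarAlgAut ℝ _ hX.eigenvectorUnitary), ← map_smul, ← map_smul,
    ← map_add, det_map, ← diagonal_one, ← diagonal_smul, ← diagonal_smul, diagonal_add,
    det_diagonal]
  simp

/-- The `μ i` are the generalized eigenvalues of the pencil `(C, B)`: writing `B = Rᴴ R`, they are
the eigenvalues of `R⁻ᴴ C R⁻¹`. -/
lemma PosDef.exists_det_smul_add_smul_eq_prod {B C : Matrix n n ℝ} (hB : B.PosDef)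
    (hC : C.PosSemidef) :
    ∃ μ : n → ℝ, (∀ i, 0 ≤ μ i) ∧ ∀ a b : ℝ, (a • B + b • C).det = B.det * ∏ i, (a + b * μ i) := by
  obtain ⟨R, hR, rfl⟩ :=
    CStarAlgebra.isStrictlyPositive_iff_eq_star_mul_self.mp hB.isStrictlyPositive
  set X := star R⁻¹ * C * R⁻¹
  have hX : X.PosSemidef := hC.conjTranspose_mul_mul_same R⁻¹
  refine ⟨hX.1.eigenvalues, hX.eigenvalues_nonneg, fun a b => ?_⟩
  have hRR : R⁻¹ * R = 1 := nonsing_inv_mul R ((isUnit_iff_isUnit_det R).mp hR)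
  have hRX : star R * X * R = C := by
    rw [show star R * X * R = star (R⁻¹ * R) * C * (R⁻¹ * R) by simp only [X, star_mul, mul_assoc],
      hRR, star_one, one_mul, mul_one]
  have hconj : a • (star R * R) + b • C = star R * (a • 1 + b • X) * R := by
    rw [← hRX]
    simp only [mul_add, add_mul, mul_smul_comm, smul_mul_assoc, mul_one]
  rw [hconj, det_mul, det_mul, hX.1.det_smul_one_add_smul, det_mul]
  ring

lemma PosDef.det_le_det {B C : Matrix n n ℝ} (hB : B.PosDef) (hBC : B ≤ C) : B.det ≤ C.det := by
  obtain ⟨μ, hμ, hdet⟩ := hB.exists_det_smul_add_smul_eq_prod hBC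
  have hC : C.det = B.det * ∏ i, (1 + μ i) := by simpa using hdet 1 1
  rw [hC]
  exact le_mul_of_one_le_right hB.det_pos.le (Finset.one_le_prod fun i _ => by linarith [hμ i])

lemma monotoneOn_log_det : MonotoneOn (fun M : Matrix n n ℝ => Real.log M.det) {M | M.PosDef} :=
  fun _ hB _ _ hBC => Real.log_le_log hB.det_pos (hB.det_le_det hBC)

lemma concaveOn_log_det : ConcaveOn ℝ {M : Matrix n n ℝ | M.PosDef} (fun M => Real.log M.det) := by
  refine ⟨convex_setOf_posDef, fun B hB C hC a b ha hb hab => ?_⟩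
  obtain ⟨μ, hμ, hdet⟩ := hB.exists_det_smul_add_smul_eq_prod hC.posSemidef
  have hC_det : C.det = B.det * ∏ i, μ i := by simpa using hdet 0 1
  have hμ_pos : ∀ i, 0 < μ i := fun i => (hμ i).lt_of_ne' <| Finset.prod_ne_zero_iff.mp
    (right_ne_zero_of_mul (hC_det ▸ hC.det_pos.ne')) i (Finset.mem_univ i)
  have hconv_pos : ∀ i, 0 < a + b * μ i := fun i => by
    simpa using (convex_Ioi (0 : ℝ)) (Set.mem_Ioi.2 one_pos) (hμ_pos i) ha hb hab
  have hlog_le : ∀ i, b * Real.log (μ i) ≤ Real.log (a + b * μ i) := fun i => by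
    simpa using strictConcaveOn_log_Ioi.concaveOn.2 (Set.mem_Ioi.2 one_pos) (hμ_pos i) ha hb hab
  have hsum := Finset.sum_le_sum fun i (_ : i ∈ Finset.univ) => hlog_le i
  rw [← Finset.mul_sum] at hsum
  have hB_det := hB.det_pos.ne'
  simp only [smul_eq_mul]
  rw [hdet, hC_det, Real.log_mul hB_det (Finset.prod_ne_zero_iff.2 fun i _ => (hμ_pos i).ne'),
    Real.log_mul hB_det (Finset.prod_ne_zero_iff.2 fun i _ => (hconv_pos i).ne'),
    Real.log_prod fun i _ => (hμ_pos i).ne', Real.log_prod fun i _ => (hconv_pos i).ne']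
  linear_combination hsum + Real.log B.det * hab

end Matrix

section InfoMatrix

variable {m k : Type*} [Fintype m] [DecidableEq m] [Fintype k] {A : Matrix m k ℝ} {M : Matrix m m ℝ}

lemma posDef_transpose_mul_inv_mul (hM : M.PosDef) (hA : Function.Injective A.mulVec) :
    (Aᵀ * M⁻¹ * A).PosDef := by
  simpa only [conjTranspose_eq_transpose_of_trivial] using hM.inv.conjTranspose_mul_mul_same hA

variable [DecidableEq k]

/-- When `M` is the moment matrix of a design, this is its information matrix for the parameter
system `Aᵀ θ`. -/
noncomputable def infoMatrix (A : Matrix m k ℝ) (M : Matrix m m ℝ) : Matrix k k ℝ :=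
  (Aᵀ * M⁻¹ * A)⁻¹

lemma log_det_infoMatrix (A : Matrix m k ℝ) (M : Matrix m m ℝ) :
    Real.log (infoMatrix A M).det = -Real.log (Aᵀ * M⁻¹ * A).det := by
  rw [infoMatrix, det_nonsing_inv, Ring.inverse_eq_inv', Real.log_inv]

lemma posDef_infoMatrix (hM : M.PosDef) (hA : Function.Injective A.mulVec) :
    (infoMatrix A M).PosDef :=
  (posDef_transpose_mul_inv_mul hM hA).inv

lemma transpose_mul_inv_mul_infoMatrix (hM : M.PosDef) (hA : Function.Injective A.mulVec) :
    Aᵀ * (M⁻¹ * A * infoMatrix A M) = 1 := by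
  rw [← Matrix.mul_assoc, ← Matrix.mul_assoc, infoMatrix,
    mul_nonsing_inv _ (posDef_transpose_mul_inv_mul hM hA).det_pos.ne'.isUnit]

lemma transpose_inv_mul_infoMatrix_mul (hM : M.PosDef) (hA : Function.Injective A.mulVec) :
    (M⁻¹ * A * infoMatrix A M)ᵀ * M = infoMatrix A M * Aᵀ := by
  have hC : (infoMatrix A M)ᵀ = infoMatrix A M := by
    simpa only [conjTranspose_eq_transpose_of_trivial] using (posDef_infoMatrix hM hA).1.eq
  have hM_inv : (M⁻¹)ᵀ = M⁻¹ := by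
    simpa only [conjTranspose_eq_transpose_of_trivial] using hM.inv.1.eq
  rw [transpose_mul, transpose_mul, hC, hM_inv, Matrix.mul_assoc, Matrix.mul_assoc,
    nonsing_inv_mul _ hM.det_pos.ne'.isUnit, Matrix.mul_one]

lemma infoMatrix_le_transpose_mul_mul (hM : M.PosDef) (hA : Function.Injective A.mulVec)
    {L : Matrix m k ℝ} (hL : Aᵀ * L = 1) : infoMatrix A M ≤ Lᵀ * M * L := by
  set C := infoMatrix A M
  set P := M⁻¹ * A * C with hP
  have hMP : M * P = A * C := by
    rw [hP, Matrix.mul_assoc, mul_nonsing_inv_cancel_left _ _ hM.det_pos.ne'.isUnit]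
  have hPM : Pᵀ * M = C * Aᵀ := transpose_inv_mul_infoMatrix_mul hM hA
  have hLA : Lᵀ * A = 1 := by simpa using congr_arg transpose hL
  have hLMP : Lᵀ * M * P = C := by
    rw [Matrix.mul_assoc, hMP, ← Matrix.mul_assoc, hLA, Matrix.one_mul]
  have hPML : Pᵀ * M * L = C := by rw [hPM, Matrix.mul_assoc, hL, Matrix.mul_one]
  have hPMP : Pᵀ * M * P = C := by
    rw [hPM, Matrix.mul_assoc, transpose_mul_inv_mul_infoMatrix hM hA, Matrix.mul_one]
  have hdiff : Lᵀ * M * L - C = (L - P)ᵀ * M * (L - P) := by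
    rw [transpose_sub, Matrix.sub_mul, Matrix.sub_mul, Matrix.mul_sub, Matrix.mul_sub, hLMP, hPML,
      hPMP, sub_self, sub_zero]
  rw [le_iff, hdiff, ← conjTranspose_eq_transpose_of_trivial]
  exact hM.posSemidef.conjTranspose_mul_mul_same _

lemma concaveOn_infoMatrix (hA : Function.Injective A.mulVec) :
    ConcaveOn ℝ {M : Matrix m m ℝ | M.PosDef} (infoMatrix A) := by
  refine ⟨convex_setOf_posDef, fun M hM N hN a b ha hb hab => ?_⟩
  set K := a • M + b • N
  have hK : K.PosDef := convex_setOf_posDef hM hN ha hb hab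
  set L := K⁻¹ * A * infoMatrix A K
  have hL : Aᵀ * L = 1 := transpose_mul_inv_mul_infoMatrix hK hA
  calc a • infoMatrix A M + b • infoMatrix A N ≤ a • (Lᵀ * M * L) + b • (Lᵀ * N * L) :=
        add_le_add (smul_le_smul_of_nonneg_left (infoMatrix_le_transpose_mul_mul hM hA hL) ha)
          (smul_le_smul_of_nonneg_left (infoMatrix_le_transpose_mul_mul hN hA hL) hb)
    _ = Lᵀ * K * L := by
        simp only [K, Matrix.mul_add, Matrix.add_mul, Matrix.mul_smul, Matrix.smul_mul]
    _ = infoMatrix A K := by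
        rw [transpose_inv_mul_infoMatrix_mul hK hA, Matrix.mul_assoc, hL, Matrix.mul_one]

lemma concaveOn_log_det_infoMatrix (hA : Function.Injective A.mulVec) :
    ConcaveOn ℝ {M : Matrix m m ℝ | M.PosDef} (fun M => Real.log (infoMatrix A M).det) :=
  concaveOn_log_det.comp_of_mapsTo (concaveOn_infoMatrix hA) monotoneOn_log_det
    fun _ hM => posDef_infoMatrix hM hA

end InfoMatrix

theorem DA_criterion_concave_general
    (p s : ℕ)
    (A : Matrix (Fin p) (Fin s) ℝ) (hA : A.rank = s)
    (M N : Matrix (Fin p) (Fin p) ℝ) (hM : M.PosDef) (hN : N.PosDef)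
    (t : ℝ) (ht0 : 0 ≤ t) (ht1 : t ≤ 1) :
    (1 - t) * (-Real.log (Aᵀ * M⁻¹ * A).det) + t * (-Real.log (Aᵀ * N⁻¹ * A).det) ≤
      -Real.log (Aᵀ * ((1 - t) • M + t • N)⁻¹ * A).det := by
  have hA_inj : Function.Injective A.mulVec :=
    mulVec_injective_of_rank_eq_card (by rwa [Fintype.card_fin])
  simpa only [log_det_infoMatrix, smul_eq_mul] using
    (concaveOn_log_det_infoMatrix hA_inj).2 hM hN (sub_nonneg.2 ht1) ht0 (sub_add_cancel 1 t)

/-- The `D_A`-criterion `M ↦ -log det(Aᵀ M⁻¹ A)` is concave on the cone of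
symmetric positive definite matrices. -/
theorem DA_criterion_concave
    (p s : ℕ) (hs : 0 < s) (hsp : s ≤ p)
    (A : Matrix (Fin p) (Fin s) ℝ) (hA : A.rank = s)
    (M N : Matrix (Fin p) (Fin p) ℝ) (hM : M.PosDef) (hN : N.PosDef)
    (t : ℝ) (ht0 : 0 ≤ t) (ht1 : t ≤ 1) :
    (1 - t) * (-Real.log (Aᵀ * M⁻¹ * A).det) + t * (-Real.log (Aᵀ * N⁻¹ * A).det) ≤
      -Real.log (Aᵀ * ((1 - t) • M + t • N)⁻¹ * A).det :=
  DA_criterion_concave_general p s A hA M N hM hN t ht0 ht1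
end
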